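/- arXiv:1405.7871 — 2 statements merged into one kernel-verified Lean document; each statement's English description precedes it below -/
import Mathlib

section
/- Let R = ℂ[x_1,…,x_n], let I_1, I_2 ⊆ R be ideals and let k ∈ ℕ. Then D_0^k[I_1] + D_0^k[I_2] ⊆ D_0^k[I_1 ∩ I_2], and there exists l ∈ ℕ such that D_0^k[I_1 ∩ I_2] ⊆ D_0^l[I_1] + D_0^l[I_2]. -/
open MvPolynomial

noncomputable section

/-- Apolarity pairing `⟨q, f⟩ = ∑ α (coeff α q) * (coeff α f)`. -/
def apair {n : ℕ} (q f : MvPolynomial (Fin n) ℂ) : ℂ :=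
  ∑ α ∈ q.support, q.coeff α * f.coeff α

lemma apair_eq_sum {n : ℕ} {q : MvPolynomial (Fin n) ℂ} {s : Finset (Fin n →₀ ℕ)}
    (h : q.support ⊆ s) (f : MvPolynomial (Fin n) ℂ) :
    apair q f = ∑ α ∈ s, q.coeff α * f.coeff α :=
  Finset.sum_subset h (fun α _ hα => by
    rw [MvPolynomial.notMem_support_iff.mp hα, zero_mul])

/-- The Macaulay dual space `D_0[I]` of an ideal at the origin. -/
def dualSpace {n : ℕ} (I : Ideal (MvPolynomial (Fin n) ℂ)) :
    Submodule ℂ (MvPolynomial (Fin n) ℂ) where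
  carrier := {q | ∀ f ∈ I, apair q f = 0}
  zero_mem' := by intro f hf; simp [apair]
  add_mem' := by
    intro a b ha hb f hf
    have h : apair (a + b) f = apair a f + apair b f := by
      rw [apair_eq_sum (s := a.support ∪ b.support) MvPolynomial.support_add,
        apair_eq_sum (s := a.support ∪ b.support) Finset.subset_union_left,
        apair_eq_sum (s := a.support ∪ b.support) Finset.subset_union_right,
        ← Finset.sum_add_distrib]
      exact Finset.sum_congr rfl fun α _ => by rw [coeff_add, add_mul]
    rw [h, ha f hf, hb f hf, add_zero]
  smul_mem' := by
    intro c q hq f hf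
    have h : apair (c • q) f = c * apair q f := by
      rw [apair_eq_sum (s := q.support) MvPolynomial.support_smul, apair, Finset.mul_sum]
      exact Finset.sum_congr rfl fun α _ => by rw [coeff_smul, smul_eq_mul, mul_assoc]
    rw [h, hq f hf, mul_zero]

open scoped Classical in
/-- The contraction `g ∘ q`, realizing the action of `g` on differential functionals:
`coeff α (contract g q) = ∑ β, coeff β g * coeff (α + β) q`. -/
def contract {n : ℕ} (g q : MvPolynomial (Fin n) ℂ) : MvPolynomial (Fin n) ℂ :=
  ∑ β ∈ g.support, ∑ α ∈ q.support,
    if β ≤ α then monomial (α - β) (g.coeff β * q.coeff α) else 0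

/-- The truncated dual space `D_0^k[I]`. -/
def truncDual {n : ℕ} (k : ℕ) (I : Ideal (MvPolynomial (Fin n) ℂ)) :
    Submodule ℂ (MvPolynomial (Fin n) ℂ) where
  carrier := {q | q ∈ dualSpace I ∧ q.totalDegree ≤ k}
  zero_mem' := ⟨(dualSpace I).zero_mem, by simp⟩
  add_mem' := fun ha hb => ⟨(dualSpace I).add_mem ha.1 hb.1,
    le_trans (MvPolynomial.totalDegree_add _ _) (max_le ha.2 hb.2)⟩
  smul_mem' := fun c q hq => ⟨(dualSpace I).smul_mem c hq.1,
    le_trans (MvPolynomial.totalDegree_smul_le c q) hq.2⟩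

/-!
By Artin–Rees for `𝔪 = (x₁, …, xₙ)` there is `c` with `I₁ ∩ (I₂ + 𝔪^(k+1+c)) ⊆ I₁ ∩ I₂ + 𝔪^(k+1)`;
take `l = k + c`. On the finite-dimensional space `V` of polynomials of degree `≤ l`, `D_0^l[I]`
is the coannihilator of the image of `I` under `f ↦ ⟨·, f⟩ ∈ V*`, so `D_0^l[I₁] + D_0^l[I₂]` is
the coannihilator of the intersection of the two images. Two polynomials with the same image
differ by an element of `𝔪^(l+1)`, so a common image comes from `f₁ ∈ I₁ ∩ (I₂ + 𝔪^(l+1))`, and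
Artin–Rees puts `f₁` in `I₁ ∩ I₂ + 𝔪^(k+1)`, which every `q ∈ D_0^k[I₁ ∩ I₂]` annihilates.
-/

theorem Subspace.dualCoannihilator_inf_eq {K V : Type*} [Field K] [AddCommGroup V] [Module K V]
    [FiniteDimensional K V] (Φ Φ' : Subspace K (Module.Dual K V)) :
    (Φ ⊓ Φ').dualCoannihilator = Φ.dualCoannihilator ⊔ Φ'.dualCoannihilator := by
  conv_lhs => rw [← Φ.dualCoannihilator_dualAnnihilator_eq,
    ← Φ'.dualCoannihilator_dualAnnihilator_eq]
  rw [← Submodule.dualAnnihilator_sup_eq, Subspace.dualAnnihilator_dualCoannihilator_eq]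

theorem Ideal.exists_inf_sup_pow_le {R : Type*} [CommRing R] [IsNoetherianRing R]
    (𝔪 I J : Ideal R) : ∃ c, ∀ m, I ⊓ (J ⊔ 𝔪 ^ (m + c)) ≤ I ⊓ J ⊔ 𝔪 ^ m := by
  obtain ⟨c, hc⟩ := 𝔪.exists_pow_inf_eq_pow_smul (I ⊔ J : Submodule R R)
  refine ⟨c, fun m f ⟨hfI, hfJ⟩ => ?_⟩
  -- `f = g + e` with `g ∈ J`; Artin–Rees splits `e ∈ (I + J) ∩ 𝔪^(m+c)` as `a + b` with
  -- `a ∈ 𝔪^m I`, `b ∈ 𝔪^m J`, and then `f - a = g + b ∈ I ∩ J`.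
  obtain ⟨g, hg, e, he, rfl⟩ := Submodule.mem_sup.mp hfJ
  have heIJ : e ∈ 𝔪 ^ (m + c) • ⊤ ⊓ (I ⊔ J) := by
    refine ⟨by rwa [Ideal.smul_eq_mul, Ideal.mul_top], ?_⟩
    simpa using Submodule.sub_mem _ (Submodule.mem_sup_left hfI) (Submodule.mem_sup_right hg)
  rw [hc (m + c) le_add_self, Nat.add_sub_cancel] at heIJ
  have he' : e ∈ 𝔪 ^ m * I ⊔ 𝔪 ^ m * J := by
    rw [← Ideal.mul_sup, ← Ideal.smul_eq_mul]
    exact Submodule.smul_mono le_rfl inf_le_right heIJ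
  obtain ⟨a, ha, b, hb, rfl⟩ := Submodule.mem_sup.mp he'
  have hIJ : g + (a + b) - a ∈ I ⊓ J := by
    refine ⟨I.sub_mem hfI (Ideal.mul_le_right ha), ?_⟩
    rw [add_sub_assoc, add_sub_cancel_left]
    exact J.add_mem hg (Ideal.mul_le_right hb)
  simpa using Submodule.add_mem_sup hIJ (Ideal.mul_le_left ha)

section Apolarity

variable {n : ℕ}

lemma apair_comm (q f : MvPolynomial (Fin n) ℂ) : apair q f = apair f q := by
  rw [apair_eq_sum (Finset.subset_union_left (s₂ := f.support)) f,
    apair_eq_sum (Finset.subset_union_right (s₁ := q.support)) q]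
  exact Finset.sum_congr rfl fun α _ => mul_comm _ _

lemma apair_add_right (q f g : MvPolynomial (Fin n) ℂ) :
    apair q (f + g) = apair q f + apair q g := by
  simp only [apair, coeff_add, mul_add, Finset.sum_add_distrib]

lemma apair_smul_right (c : ℂ) (q f : MvPolynomial (Fin n) ℂ) :
    apair q (c • f) = c * apair q f := by
  simp only [apair, coeff_smul, smul_eq_mul, Finset.mul_sum, mul_left_comm]

lemma apair_add_left (q f g : MvPolynomial (Fin n) ℂ) :
    apair (q + f) g = apair q g + apair f g := by
  rw [apair_comm, apair_add_right, apair_comm g q, apair_comm g f]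

lemma apair_smul_left (c : ℂ) (q f : MvPolynomial (Fin n) ℂ) :
    apair (c • q) f = c * apair q f := by
  rw [apair_comm, apair_smul_right, apair_comm]

lemma apair_monomial_one_left (α : Fin n →₀ ℕ) (f : MvPolynomial (Fin n) ℂ) :
    apair (monomial α 1) f = coeff α f := by
  simp [apair, support_monomial]

lemma apair_eq_zero_of_mem_pow_idealOfVars {k : ℕ} {q f : MvPolynomial (Fin n) ℂ}
    (hq : q.totalDegree ≤ k) (hf : f ∈ idealOfVars (Fin n) ℂ ^ (k + 1)) : apair q f = 0 :=
  Finset.sum_eq_zero fun α hα => by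
    rw [(mem_pow_idealOfVars_iff' _ f).mp hf α (Nat.lt_succ_of_le ((le_totalDegree hα).trans hq)),
      mul_zero]

variable (n) in
def apairDual (l : ℕ) :
    MvPolynomial (Fin n) ℂ →ₗ[ℂ] Module.Dual ℂ (restrictTotalDegree (Fin n) ℂ l) :=
  LinearMap.mk₂ ℂ (fun f q => apair q.1 f)
    (fun _ _ _ => apair_add_right _ _ _) (fun _ _ _ => apair_smul_right _ _ _)
    (fun _ _ _ => apair_add_left _ _ _) (fun _ _ _ => apair_smul_left _ _ _)

lemma mem_pow_idealOfVars_of_apairDual_eq_zero {l : ℕ} {f : MvPolynomial (Fin n) ℂ}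
    (hf : apairDual n l f = 0) : f ∈ idealOfVars (Fin n) ℂ ^ (l + 1) := by
  refine (mem_pow_idealOfVars_iff' _ f).mpr fun α hα => ?_
  have hα' : monomial α (1 : ℂ) ∈ restrictTotalDegree (Fin n) ℂ l :=
    (mem_restrictTotalDegree _ _ _).mpr ((totalDegree_monomial_le α 1).trans (Nat.le_of_lt_succ hα))
  simpa [apairDual, apair_monomial_one_left] using LinearMap.congr_fun hf ⟨_, hα'⟩

lemma truncDual_eq_map_dualCoannihilator (l : ℕ) (I : Ideal (MvPolynomial (Fin n) ℂ)) :
    truncDual l I = ((I.restrictScalars ℂ).map (apairDual n l)).dualCoannihilator.map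
      (restrictTotalDegree (Fin n) ℂ l).subtype := by
  ext q
  simp only [Submodule.mem_map, Submodule.mem_dualCoannihilator]
  constructor
  · rintro ⟨hqI, hq⟩
    refine ⟨⟨q, (mem_restrictTotalDegree _ _ _).mpr hq⟩, ?_, rfl⟩
    rintro _ ⟨f, hf, rfl⟩
    exact hqI f hf
  · rintro ⟨q, hq, rfl⟩
    exact ⟨fun f hf => hq _ ⟨f, hf, rfl⟩, (mem_restrictTotalDegree _ _ _).mp q.2⟩

lemma truncDual_anti (k : ℕ) : Antitone (truncDual (n := n) k) :=
  fun _ _ hIJ _ hq => ⟨fun f hf => hq.1 f (hIJ hf), hq.2⟩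

lemma mem_dualSpace_sup_pow_of_mem_truncDual {k : ℕ} {I : Ideal (MvPolynomial (Fin n) ℂ)}
    {q : MvPolynomial (Fin n) ℂ} (hq : q ∈ truncDual k I) :
    q ∈ dualSpace (I ⊔ idealOfVars (Fin n) ℂ ^ (k + 1)) := by
  intro f hf
  obtain ⟨a, ha, b, hb, rfl⟩ := Submodule.mem_sup.mp hf
  rw [apair_add_right, hq.1 a ha, apair_eq_zero_of_mem_pow_idealOfVars hq.2 hb, add_zero]

end Apolarity

/-- `D_0^k[I₁] + D_0^k[I₂] ⊆ D_0^k[I₁ ∩ I₂]`, and there exists `l` with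
`D_0^k[I₁ ∩ I₂] ⊆ D_0^l[I₁] + D_0^l[I₂]`. -/
theorem truncDual_inf_le_and_exists (n : ℕ) (I₁ I₂ : Ideal (MvPolynomial (Fin n) ℂ))
    (k : ℕ) :
    truncDual k I₁ + truncDual k I₂ ≤ truncDual k (I₁ ⊓ I₂) ∧
    ∃ l : ℕ, truncDual k (I₁ ⊓ I₂) ≤ truncDual l I₁ + truncDual l I₂ := by
  refine ⟨sup_le (truncDual_anti k inf_le_left) (truncDual_anti k inf_le_right), ?_⟩
  obtain ⟨c, hc⟩ := Ideal.exists_inf_sup_pow_le (idealOfVars (Fin n) ℂ) I₁ I₂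
  refine ⟨k + c, fun q hq => ?_⟩
  rw [Submodule.add_eq_sup, truncDual_eq_map_dualCoannihilator,
    truncDual_eq_map_dualCoannihilator, ← Submodule.map_sup, ← Subspace.dualCoannihilator_inf_eq]
  have hq' : q ∈ restrictTotalDegree (Fin n) ℂ (k + c) :=
    (mem_restrictTotalDegree _ _ _).mpr (hq.2.trans le_self_add)
  refine ⟨⟨q, hq'⟩, (Submodule.mem_dualCoannihilator _).mpr ?_, rfl⟩
  rintro _ ⟨⟨f₁, hf₁, rfl⟩, ⟨f₂, hf₂, hf⟩⟩
  have hdiff : f₁ - f₂ ∈ idealOfVars (Fin n) ℂ ^ (k + 1 + c) := by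
    rw [Nat.add_right_comm]
    exact mem_pow_idealOfVars_of_apairDual_eq_zero (by rw [map_sub, hf, sub_self])
  have hf₁₂ : f₁ ∈ I₁ ⊓ (I₂ ⊔ idealOfVars (Fin n) ℂ ^ (k + 1 + c)) :=
    ⟨hf₁, Submodule.mem_sup.mpr ⟨f₂, hf₂, f₁ - f₂, hdiff, add_sub_cancel f₂ f₁⟩⟩
  exact mem_dualSpace_sup_pow_of_mem_truncDual hq f₁ (hc (k + 1) hf₁₂)
end
end

section
/- Let R = ℂ[x_1,…,x_n] and let ≥ be a local monomial order: a total order on the exponent lattice ℕ^n compatible with addition (α ≥ β implies α + γ ≥ β + γ) in which 0 is the largest element (1 is the largest monomial). For 0 ≠ f ∈ R let in_≥(f) ∈ ℕ^n be the ≥-largest exponent in the support of f, and for 0 ≠ q ∈ R let in_≽(q) ∈ ℕ^n be the ≥-smallest exponent in the support of q (the initial term with respect to the dual order ≽ opposite to ≥). Then for every ideal I ⊆ R, the lattice ℕ^n is the disjoint union of { in_≥(f) : 0 ≠ f ∈ I } and { in_≽(q) : 0 ≠ q ∈ D_0[I] }. -/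
/-!
Let `M_γ` be the monomial ideal spanned by the exponents strictly below `γ` and `𝔪` the ideal
of the variables. If `x^γ ∈ I + M_γ + 𝔪^k` for every `k`, Krull's intersection theorem in
`R ⧸ (I + M_γ)` gives `r ∈ 𝔪` with `(1 - r) x^γ ∈ I + M_γ`; as the order is local, removing the
`M_γ` part leaves an element of `I` with initial exponent `γ`. Otherwise some
`K = I + M_γ + 𝔪^k` misses `x^γ`, and a linear functional vanishing on `K` but not at `x^γ` is,
since it kills `𝔪^k`, the pairing with a polynomial `q ∈ D_0[I]` whose coefficients vanish below
`γ` but not at `γ`. Both cannot happen at once: `⟨q, f⟩` would be the nonzero product of the two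
coefficients at `γ`.
-/

open MvPolynomial

noncomputable section

structure IsLocalMonomialOrder {M : Type*} [AddCommMonoid M] (ge : M → M → Prop) : Prop where
  total : ∀ a b, ge a b ∨ ge b a
  antisymm : ∀ a b, ge a b → ge b a → a = b
  trans : ∀ a b c, ge a b → ge b c → ge a c
  add_right : ∀ a b c, ge a b → ge (a + c) (b + c)
  zero_ge : ∀ a, ge 0 a

namespace IsLocalMonomialOrder

variable {M : Type*} [AddCommMonoid M] {ge : M → M → Prop}

theorem refl (hge : IsLocalMonomialOrder ge) (a : M) : ge a a :=
  (hge.total a a).elim id id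

theorem ge_add_left (hge : IsLocalMonomialOrder ge) (a b : M) : ge a (b + a) := by
  simpa using hge.add_right 0 b a (hge.zero_ge b)

end IsLocalMonomialOrder

section LocalOrder

variable {σ R : Type*} {ge : (σ →₀ ℕ) → (σ →₀ ℕ) → Prop}

def belowIdeal [CommSemiring R] (ge : (σ →₀ ℕ) → (σ →₀ ℕ) → Prop) (γ : σ →₀ ℕ) :
    Ideal (MvPolynomial σ R) :=
  Ideal.span ((fun δ => monomial δ (1 : R)) '' {δ | ge γ δ ∧ δ ≠ γ})

theorem monomial_mem_belowIdeal [CommSemiring R] {γ δ : σ →₀ ℕ} (h : ge γ δ) (hne : δ ≠ γ) :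
    monomial δ (1 : R) ∈ belowIdeal ge γ :=
  Ideal.subset_span ⟨δ, ⟨h, hne⟩, rfl⟩

theorem IsLocalMonomialOrder.lt_of_mem_support_of_mem_belowIdeal [CommSemiring R]
    (hge : IsLocalMonomialOrder ge) {γ ε : σ →₀ ℕ} {f : MvPolynomial σ R}
    (hf : f ∈ belowIdeal ge γ) (hε : ε ∈ f.support) : ge γ ε ∧ ε ≠ γ := by
  obtain ⟨δ, ⟨hγδ, hδγ⟩, hδε⟩ := mem_ideal_span_monomial_image.mp hf ε hε
  have hδε' : ge δ ε := by
    simpa [tsub_add_cancel_of_le hδε] using hge.ge_add_left δ (ε - δ)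
  refine ⟨hge.trans _ _ _ hγδ hδε', fun hεγ => hδγ ?_⟩
  exact hge.antisymm _ _ (hεγ ▸ hδε') hγδ

end LocalOrder

theorem Ideal.exists_one_sub_mul_mem_of_forall_mem_sup_pow {R : Type*} [CommRing R]
    [IsNoetherianRing R] {J m : Ideal R} {x : R} (h : ∀ k : ℕ, x ∈ J ⊔ m ^ k) :
    ∃ r ∈ m, (1 - r) * x ∈ J := by
  have hx : J.mkQ x ∈ (⨅ k : ℕ, m ^ k • ⊤ : Submodule R (R ⧸ J)) := by
    refine Submodule.mem_iInf _ |>.mpr fun k => ?_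
    obtain ⟨a, ha, b, hb, rfl⟩ := Submodule.mem_sup.mp (h k)
    have : J.mkQ (a + b) = b • J.mkQ 1 := by
      rw [← map_smul, smul_eq_mul, mul_one, map_add, Submodule.mkQ_apply,
        (Submodule.Quotient.mk_eq_zero J).mpr ha, zero_add]
    exact this ▸ Submodule.smul_mem_smul hb Submodule.mem_top
  obtain ⟨⟨r, hr⟩, hrx⟩ := (m.mem_iInf_smul_pow_eq_bot_iff _).mp hx
  refine ⟨r, hr, (Submodule.Quotient.mk_eq_zero J).mp ?_⟩
  rw [sub_mul, one_mul, Submodule.Quotient.mk_sub]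
  exact sub_eq_zero.mpr hrx.symm

section InitialExponents

variable {σ R : Type*} {ge : (σ →₀ ℕ) → (σ →₀ ℕ) → Prop}

theorem coeff_one_sub_mul_monomial_self [CommRing R] {r : MvPolynomial σ R}
    (hr : r ∈ idealOfVars σ R) (γ : σ →₀ ℕ) :
    ((1 - r) * monomial γ 1).coeff γ = 1 := by
  have hr0 : r.coeff 0 = 0 :=
    (mem_pow_idealOfVars_iff' 1 r).mp (by rwa [pow_one]) 0 (by simp)
  simpa [hr0] using coeff_mul_monomial 0 γ (1 : R) (1 - r)

theorem IsLocalMonomialOrder.exists_initial_mem_of_forall_mem_sup_pow [CommRing R]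
    [IsNoetherianRing R] [Nontrivial R] [Finite σ] (hge : IsLocalMonomialOrder ge)
    {I : Ideal (MvPolynomial σ R)} {γ : σ →₀ ℕ}
    (h : ∀ k : ℕ, monomial γ 1 ∈ I ⊔ belowIdeal ge γ ⊔ idealOfVars σ R ^ k) :
    ∃ f ∈ I, f ≠ 0 ∧ γ ∈ f.support ∧ ∀ δ ∈ f.support, ge γ δ := by
  classical
  obtain ⟨r, hr, hrγ⟩ := Ideal.exists_one_sub_mul_mem_of_forall_mem_sup_pow h
  obtain ⟨f, hf, b, hb, hfb⟩ := Submodule.mem_sup.mp hrγ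
  have hbγ : b.coeff γ = 0 :=
    notMem_support_iff.mp fun hγ => (hge.lt_of_mem_support_of_mem_belowIdeal hb hγ).2 rfl
  have hfγ : f.coeff γ = 1 := by
    rw [eq_sub_of_add_eq hfb, coeff_sub, coeff_one_sub_mul_monomial_self hr, hbγ, sub_zero]
  have hγf : γ ∈ f.support := mem_support_iff.mpr (hfγ ▸ one_ne_zero)
  refine ⟨f, hf, by rintro rfl; simp at hγf, hγf, fun δ hδ => ?_⟩
  rw [eq_sub_of_add_eq hfb] at hδ
  rcases Finset.mem_union.mp (support_sub σ _ _ hδ) with hδ | hδ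
  · obtain ⟨ε, -, γ', hγ', rfl⟩ := Finset.mem_add.mp (support_mul _ _ hδ)
    rw [Finset.mem_singleton.mp (support_monomial_subset hγ')]
    exact hge.ge_add_left γ ε
  · exact (hge.lt_of_mem_support_of_mem_belowIdeal hb hδ).1

end InitialExponents

theorem exists_coeff_eq_apply_monomial {σ R : Type*} [CommRing R] [Nontrivial R] [Finite σ]
    {k : ℕ} (ψ : MvPolynomial σ R →ₗ[R] R) (hψ : ∀ p ∈ idealOfVars σ R ^ k, ψ p = 0) :
    ∃ q : MvPolynomial σ R, ∀ δ, q.coeff δ = ψ (monomial δ 1) := by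
  have hfin : (Function.support fun δ => ψ (monomial δ 1)).Finite := by
    refine (Finsupp.finite_of_degree_le k).subset fun δ hδ => ?_
    by_contra hdeg
    exact hδ (hψ _ ((monomial_mem_pow_idealOfVars_iff k δ one_ne_zero).mpr
      (le_of_lt (not_le.mp hdeg))))
  exact ⟨.ofCoeff (Finsupp.ofSupportFinite _ hfin), fun δ => rfl⟩

theorem apair_eq_of_coeff_eq_apply_monomial {n : ℕ} {q : MvPolynomial (Fin n) ℂ}
    (ψ : MvPolynomial (Fin n) ℂ →ₗ[ℂ] ℂ) (hq : ∀ δ, q.coeff δ = ψ (monomial δ 1))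
    (f : MvPolynomial (Fin n) ℂ) : apair q f = ψ f := by
  have hψf : ψ f = ∑ δ ∈ q.support ∪ f.support, q.coeff δ * f.coeff δ := by
    conv_lhs => rw [f.as_sum]
    rw [map_sum, Finset.sum_subset Finset.subset_union_right fun δ _ hδ => by
      rw [notMem_support_iff.mp hδ, monomial_zero, map_zero]]
    refine Finset.sum_congr rfl fun δ _ => ?_
    rw [hq, mul_comm, ← smul_eq_mul, ← map_smul, smul_monomial, smul_eq_mul, mul_one]
  rw [hψf, apair_eq_sum Finset.subset_union_left]

section DualSpace

variable {n : ℕ} {ge : (Fin n →₀ ℕ) → (Fin n →₀ ℕ) → Prop}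

theorem IsLocalMonomialOrder.apair_eq_coeff_mul_coeff (hge : IsLocalMonomialOrder ge)
    {q f : MvPolynomial (Fin n) ℂ} {γ : Fin n →₀ ℕ} (hq : ∀ δ ∈ q.support, ge δ γ)
    (hf : ∀ δ ∈ f.support, ge γ δ) : apair q f = q.coeff γ * f.coeff γ := by
  refine Finset.sum_eq_single γ (fun δ hδ hδγ => ?_) fun hγ => by
    rw [notMem_support_iff.mp hγ, zero_mul]
  rw [notMem_support_iff.mp fun hδf => hδγ (hge.antisymm _ _ (hq δ hδ) (hf δ hδf)), mul_zero]

theorem IsLocalMonomialOrder.exists_initial_mem_dualSpace_of_notMem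
    (hge : IsLocalMonomialOrder ge) {I : Ideal (MvPolynomial (Fin n) ℂ)} {γ : Fin n →₀ ℕ}
    {k : ℕ} (h : monomial γ 1 ∉ I ⊔ belowIdeal ge γ ⊔ idealOfVars (Fin n) ℂ ^ k) :
    ∃ q ∈ dualSpace I, q ≠ 0 ∧ γ ∈ q.support ∧ ∀ δ ∈ q.support, ge δ γ := by
  set K := I ⊔ belowIdeal ge γ ⊔ idealOfVars (Fin n) ℂ ^ k
  obtain ⟨ψ, hψγ, hψK⟩ :=
    Submodule.exists_dual_map_eq_bot_of_notMem (p := K.restrictScalars ℂ) h inferInstance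
  have hψ : ∀ p ∈ K, ψ p = 0 := fun p hp =>
    (Submodule.mem_bot ℂ).mp (hψK ▸ Submodule.mem_map_of_mem (p := K.restrictScalars ℂ) hp)
  obtain ⟨q, hq⟩ := exists_coeff_eq_apply_monomial ψ fun p hp => hψ p (Ideal.mem_sup_right hp)
  have hγq : γ ∈ q.support := mem_support_iff.mpr (hq γ ▸ hψγ)
  refine ⟨q, fun f hf => ?_, by rintro rfl; simp at hγq, hγq, fun δ hδ => ?_⟩
  · rw [apair_eq_of_coeff_eq_apply_monomial ψ hq]
    exact hψ f (Ideal.mem_sup_left (Ideal.mem_sup_left hf))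
  · by_cases hδγ : δ = γ
    · exact hδγ ▸ hge.refl γ
    refine (hge.total δ γ).resolve_right fun hγδ => mem_support_iff.mp hδ ?_
    rw [hq]
    exact hψ _ (Ideal.mem_sup_left (Ideal.mem_sup_right (monomial_mem_belowIdeal hγδ hδγ)))

end DualSpace

/-- For a local monomial order `≥` (total, compatible with addition,
with `0` the largest exponent, i.e. `1` the largest monomial), the monomial lattice `ℕⁿ`
is the disjoint union of the set of initial exponents of nonzero elements of `I` and the
set of initial exponents (w.r.t. the opposite, dual order) of nonzero elements of
`D_0[I]`. -/
theorem initial_exponents_partition (n : ℕ)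
    (ge : (Fin n →₀ ℕ) → (Fin n →₀ ℕ) → Prop)
    (htotal : ∀ a b, ge a b ∨ ge b a)
    (hantisymm : ∀ a b, ge a b → ge b a → a = b)
    (htrans : ∀ a b c, ge a b → ge b c → ge a c)
    (hadd : ∀ a b c, ge a b → ge (a + c) (b + c))
    (htop : ∀ a, ge 0 a)
    (I : Ideal (MvPolynomial (Fin n) ℂ)) :
    ∀ γ : Fin n →₀ ℕ,
      Xor'
        (∃ f ∈ I, f ≠ 0 ∧ γ ∈ f.support ∧ ∀ δ ∈ f.support, ge γ δ)
        (∃ q ∈ dualSpace I, q ≠ 0 ∧ γ ∈ q.support ∧ ∀ δ ∈ q.support, ge δ γ) := by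
  intro γ
  have hge : IsLocalMonomialOrder ge := ⟨htotal, hantisymm, htrans, hadd, htop⟩
  refine (xor_iff_or_and_not_and _ _).mpr ⟨?_, ?_⟩
  · by_cases h : ∀ k : ℕ, monomial γ 1 ∈ I ⊔ belowIdeal ge γ ⊔ idealOfVars (Fin n) ℂ ^ k
    · exact .inl (hge.exists_initial_mem_of_forall_mem_sup_pow h)
    · obtain ⟨k, hk⟩ := not_forall.mp h
      exact .inr (hge.exists_initial_mem_dualSpace_of_notMem hk)
  · rintro ⟨⟨f, hfI, -, hγf, hf⟩, ⟨q, hqI, -, hγq, hq⟩⟩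
    have hpair := hqI f hfI
    rw [hge.apair_eq_coeff_mul_coeff hq hf] at hpair
    exact mul_ne_zero (mem_support_iff.mp hγq) (mem_support_iff.mp hγf) hpair
end
end
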